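/- Let $X \in C^2([0,T]^2;\mathbb{R}^d)$ and $w = (i_1,\dots,i_n)$ a word. Then the product of rectangular increments satisfies $\prod_{k=1}^n \square_{\mathbf{s}\mathbf{t}}X^{w_k} = \sum_{\nu,\nu' \in \Sigma_n} \langle \mathbf{S}_{\mathbf{s}\mathbf{t}}(X), (w_\nu, \nu')\rangle$, where $w_\nu = (w_{\nu(1)},\dots,w_{\nu(n)})$ and $\square_{\mathbf{s}\mathbf{t}}X^i$ denotes the rectangular increment of the $i$-th coordinate. -/

import Mathlib

open MeasureTheory

/-- The mixed partial derivative `∂²f/∂r₁∂r₂`. -/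
noncomputable def d12 (f : ℝ × ℝ → ℝ) (p : ℝ × ℝ) : ℝ :=
  deriv (fun a => deriv (fun b => f (a, b)) p.2) p.1

/-- The 1D simplex `Δ_{a,b}^n`. -/
def simplex (a b : ℝ) (n : ℕ) : Set (Fin n → ℝ) :=
  {r | (∀ i, a ≤ r i ∧ r i ≤ b) ∧ ∀ i j : Fin n, i ≤ j → r i ≤ r j}

/-- The 2D simplex `Δ^n_{[s,t]}`: `n`-tuples of points of the rectangle, increasing in
both coordinates (recorded as a pair of increasing coordinate sequences). -/
def simplex2 (s1 t1 s2 t2 : ℝ) (n : ℕ) : Set ((Fin n → ℝ) × (Fin n → ℝ)) :=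
  {p | p.1 ∈ simplex s1 t1 n ∧ p.2 ∈ simplex s2 t2 n}

/-- The full 2D signature coefficient
`⟨S_{s,t}(X), (w, ν)⟩ = ∫_{Δⁿ_{[s,t]}} ∏ᵢ ∂₁₂X^{wᵢ}(r₁ⁱ, r₂^{ν(i)})`. -/
noncomputable def sigFull {d : ℕ} (X : Fin d → ℝ × ℝ → ℝ) (s1 s2 t1 t2 : ℝ)
    {n : ℕ} (w : Fin n → Fin d) (ν : Equiv.Perm (Fin n)) : ℝ :=
  ∫ p in simplex2 s1 t1 s2 t2 n, ∏ i, d12 (X (w i)) (p.1 i, p.2 (ν i))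

/-!
By the fundamental theorem of calculus in each variable followed by Fubini, `□_{s,t} X^i` is the
integral of `∂₁₂X^i` over the rectangle `[s₁,t₁] × [s₂,t₂]`, so the product of the increments is
the integral of `∏ₖ ∂₁₂X^{wₖ}(r₁ᵏ, r₂ᵏ)` over `n`-tuples of points of the rectangle. Off the null
set of tuples with a repeated coordinate, these tuples split into the sectors where the first
coordinates are sorted by a permutation `σ` and the second ones by `τ`. Relabelling the points by
`σ` maps the sector onto the doubly-ordered simplex and turns its integral into the signature
coefficient indexed by `(w_σ, τ⁻¹σ)`; for fixed `σ`, `τ ↦ τ⁻¹σ` runs over all permutations.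
-/

open Set Function

theorem setIntegral_Icc_prod_Icc_eq_intervalIntegral {f : ℝ × ℝ → ℝ} {s1 t1 s2 t2 : ℝ}
    (h1 : s1 ≤ t1) (h2 : s2 ≤ t2) (hf : IntegrableOn f (Icc s1 t1 ×ˢ Icc s2 t2)) :
    ∫ z in Icc s1 t1 ×ˢ Icc s2 t2, f z = ∫ b in s2..t2, ∫ a in s1..t1, f (a, b) := by
  rw [Measure.volume_eq_prod, ← setIntegral_prod_swap, setIntegral_prod _ ?_,
    intervalIntegral.integral_of_le h2, ← integral_Icc_eq_integral_Ioc]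
  · refine setIntegral_congr_fun measurableSet_Icc fun b _ => ?_
    rw [intervalIntegral.integral_of_le h1, ← integral_Icc_eq_integral_Ioc]
    rfl
  · exact hf.swap

section PartialDerivatives

variable {g : ℝ × ℝ → ℝ}

theorem hasDerivAt_partial_fst {a b : ℝ} (hg : DifferentiableAt ℝ g (a, b)) :
    HasDerivAt (fun x => g (x, b)) (fderiv ℝ g (a, b) (1, 0)) a :=
  hg.hasFDerivAt.comp_hasDerivAt a ((hasDerivAt_id a).prodMk (hasDerivAt_const a b))

theorem hasDerivAt_partial_snd {a b : ℝ} (hg : DifferentiableAt ℝ g (a, b)) :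
    HasDerivAt (fun y => g (a, y)) (fderiv ℝ g (a, b) (0, 1)) b :=
  hg.hasFDerivAt.comp_hasDerivAt b ((hasDerivAt_const b a).prodMk (hasDerivAt_id b))

noncomputable def partialSnd (g : ℝ × ℝ → ℝ) (p : ℝ × ℝ) : ℝ := fderiv ℝ g p (0, 1)

theorem ContDiff.partialSnd (hg : ContDiff ℝ 2 g) : ContDiff ℝ 1 (partialSnd g) :=
  (hg.fderiv_right le_rfl).clm_apply contDiff_const

theorem d12_eq_fderiv_partialSnd (hg : ContDiff ℝ 2 g) (p : ℝ × ℝ) :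
    d12 g p = fderiv ℝ (partialSnd g) p (1, 0) := by
  have hinner : (fun x => deriv (fun y => g (x, y)) p.2) = fun x => partialSnd g (x, p.2) :=
    funext fun x => (hasDerivAt_partial_snd (hg.differentiable two_ne_zero _)).deriv
  rw [d12, hinner]
  exact (hasDerivAt_partial_fst (hg.partialSnd.differentiable one_ne_zero _)).deriv

theorem hasDerivAt_partialSnd_fst (hg : ContDiff ℝ 2 g) (a b : ℝ) :
    HasDerivAt (fun x => partialSnd g (x, b)) (d12 g (a, b)) a := by
  rw [d12_eq_fderiv_partialSnd hg]
  exact hasDerivAt_partial_fst (hg.partialSnd.differentiable one_ne_zero _)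

theorem continuous_d12 (hg : ContDiff ℝ 2 g) : Continuous (d12 g) := by
  rw [funext (d12_eq_fderiv_partialSnd hg)]
  exact (hg.partialSnd.continuous_fderiv one_ne_zero).clm_apply continuous_const

theorem rectIncrement_eq_intervalIntegral_d12 (hg : ContDiff ℝ 2 g) (s1 t1 s2 t2 : ℝ) :
    g (t1, t2) - g (s1, t2) - g (t1, s2) + g (s1, s2) =
      ∫ b in s2..t2, ∫ a in s1..t1, d12 g (a, b) := by
  have hcont := hg.partialSnd.continuous
  have hd12 := continuous_d12 hg
  have hderiv (x b : ℝ) : HasDerivAt (fun y => g (x, y)) (partialSnd g (x, b)) b :=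
    hasDerivAt_partial_snd (hg.differentiable two_ne_zero _)
  have hinner (b : ℝ) :
      ∫ a in s1..t1, d12 g (a, b) = partialSnd g (t1, b) - partialSnd g (s1, b) :=
    intervalIntegral.integral_eq_sub_of_hasDerivAt (fun a _ => hasDerivAt_partialSnd_fst hg a b)
      (Continuous.intervalIntegrable (by fun_prop) _ _)
  have houter : ∫ b in s2..t2, (partialSnd g (t1, b) - partialSnd g (s1, b)) =
      g (t1, t2) - g (s1, t2) - (g (t1, s2) - g (s1, s2)) :=
    intervalIntegral.integral_eq_sub_of_hasDerivAt
      (fun b _ => (hderiv t1 b).sub (hderiv s1 b))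
      (Continuous.intervalIntegrable (by fun_prop) _ _)
  simp only [hinner, houter]
  ring

theorem rectIncrement_eq_setIntegral_d12 (hg : ContDiff ℝ 2 g) {s1 t1 s2 t2 : ℝ}
    (h1 : s1 ≤ t1) (h2 : s2 ≤ t2) :
    g (t1, t2) - g (s1, t2) - g (t1, s2) + g (s1, s2) =
      ∫ z in Icc s1 t1 ×ˢ Icc s2 t2, d12 g z := by
  rw [rectIncrement_eq_intervalIntegral_d12 hg,
    setIntegral_Icc_prod_Icc_eq_intervalIntegral h1 h2
      ((continuous_d12 hg).continuousOn.integrableOn_compact (isCompact_Icc.prod isCompact_Icc))]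

end PartialDerivatives

theorem prod_setIntegral_eq_setIntegral_pi_prod {ι α β : Type*} [Fintype ι] [MeasureSpace α]
    [MeasureSpace β] [SigmaFinite (volume : Measure α)] [SigmaFinite (volume : Measure β)]
    (s : Set α) (t : Set β) (f : ι → α × β → ℝ) :
    ∏ k, ∫ z in s ×ˢ t, f k z =
      ∫ p in (univ.pi fun _ => s) ×ˢ univ.pi fun _ => t, ∏ k, f k (p.1 k, p.2 k) := by
  let e := MeasurableEquiv.arrowProdEquivProdArrow α β ι
  have he_apply (x : ι → α × β) : e x = (fun i => (x i).1, fun i => (x i).2) := rfl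
  have hpre : e ⁻¹' ((univ.pi fun _ => s) ×ˢ univ.pi fun _ => t) = univ.pi fun _ => s ×ˢ t := by
    ext
    simp [he_apply, mem_pi, forall_and]
  rw [← (volume_measurePreserving_arrowProdEquivProdArrow α β ι).setIntegral_preimage_emb
    e.measurableEmbedding, hpre, volume_pi, Measure.restrict_pi_pi]
  exact (integral_fintype_prod_eq_prod _).symm

theorem aedisjoint_prod {α β : Type*} [MeasurableSpace α] [MeasurableSpace β] {μ : Measure α}
    {ν : Measure β} [SFinite ν] {s s' : Set α} {t t' : Set β}
    (h : AEDisjoint μ s s' ∨ AEDisjoint ν t t') :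
    AEDisjoint (μ.prod ν) (s ×ˢ t) (s' ×ˢ t') := by
  rw [AEDisjoint, prod_inter_prod, Measure.prod_prod]
  rcases h with h | h <;> simp [h.eq]

section SortedSectors

theorem measurableSet_simplex (a b : ℝ) (n : ℕ) : MeasurableSet (simplex a b n) := by
  have hbounds : MeasurableSet {r : Fin n → ℝ | ∀ i, a ≤ r i ∧ r i ≤ b} := by
    simp only [ofPred_forall]
    exact .iInter fun i => (measurableSet_le measurable_const (measurable_pi_apply i)).inter
      (measurableSet_le (measurable_pi_apply i) measurable_const)
  have hmono : MeasurableSet {r : Fin n → ℝ | ∀ i j : Fin n, i ≤ j → r i ≤ r j} := by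
    simp only [ofPred_forall]
    exact .iInter fun i => .iInter fun j => .iInter fun _ =>
      measurableSet_le (measurable_pi_apply i) (measurable_pi_apply j)
  exact hbounds.inter hmono

def sortedSector (a b : ℝ) (n : ℕ) (σ : Equiv.Perm (Fin n)) : Set (Fin n → ℝ) :=
  (· ∘ σ) ⁻¹' simplex a b n

variable {a b : ℝ} {n : ℕ}

theorem measurableSet_sortedSector (σ : Equiv.Perm (Fin n)) :
    MeasurableSet (sortedSector a b n σ) :=
  measurableSet_simplex a b n |>.preimage <|
    measurable_pi_lambda _ fun i => measurable_pi_apply (σ i)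

theorem iUnion_sortedSector :
    ⋃ σ, sortedSector a b n σ = univ.pi fun _ => Icc a b := by
  ext x
  simp only [sortedSector, simplex, mem_iUnion, mem_preimage, mem_univ_pi, mem_ofPred_eq,
    comp_apply]
  constructor
  · rintro ⟨σ, hbounds, -⟩ i
    simpa using hbounds (σ.symm i)
  · exact fun hx => ⟨Tuple.sort x, fun i => hx _, fun i j hij => Tuple.monotone_sort x hij⟩

theorem ae_injective_pi_real {ι : Type*} [Fintype ι] : ∀ᵐ x : ι → ℝ, Injective x := by
  classical
  have hdiag {i j : ι} (hij : i ≠ j) : volume {x : ι → ℝ | x i = x j} = 0 := by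
    let L : (ι → ℝ) →ₗ[ℝ] ℝ := LinearMap.proj (R := ℝ) (φ := fun _ => ℝ) i - LinearMap.proj j
    have hker : {x : ι → ℝ | x i = x j} = LinearMap.ker L := by
      ext x
      simp [L, sub_eq_zero]
    rw [hker]
    refine Measure.addHaar_submodule volume _ fun htop => ?_
    have hsingle : L (Pi.single i 1) = 1 := by simp [L, Pi.single_eq_of_ne' hij]
    simp [LinearMap.ker_eq_top.mp htop] at hsingle
  have hnoninj : {x : ι → ℝ | ¬Injective x} ⊆ ⋃ (i) (j) (_ : i ≠ j), {x | x i = x j} := by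
    intro x hx
    simp only [Injective, not_forall] at hx
    obtain ⟨i, j, hxij, hij⟩ := hx
    exact mem_iUnion₂.mpr ⟨i, j, mem_iUnion.mpr ⟨hij, hxij⟩⟩
  exact measure_mono_null hnoninj <| measure_iUnion_null fun i => measure_iUnion_null fun j =>
    measure_iUnion_null fun hij => hdiag hij

theorem pairwise_aedisjoint_sortedSector :
    Pairwise (AEDisjoint volume on sortedSector a b n) := by
  intro σ τ hστ
  refine measure_mono_null (fun x ⟨hσ, hτ⟩ => show ¬Injective x from fun hinj => hστ ?_)
    (ae_iff.mp ae_injective_pi_real)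
  have hsorted : x ∘ σ = x ∘ τ := Tuple.unique_monotone (fun i j hij => hσ.2 i j hij)
    (fun i j hij => hτ.2 i j hij)
  exact Equiv.ext fun i => hinj (congrFun hsorted i)

end SortedSectors

section SectorIntegrals

variable {n : ℕ} {s1 t1 s2 t2 : ℝ}

theorem setIntegral_pi_Icc_prod_eq_sum_sortedSector {F : (Fin n → ℝ) × (Fin n → ℝ) → ℝ}
    (hF : IntegrableOn F ((univ.pi fun _ => Icc s1 t1) ×ˢ univ.pi fun _ => Icc s2 t2)) :
    ∫ p in (univ.pi fun _ => Icc s1 t1) ×ˢ univ.pi fun _ => Icc s2 t2, F p =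
      ∑ σ, ∑ τ, ∫ p in sortedSector s1 t1 n σ ×ˢ sortedSector s2 t2 n τ, F p := by
  rw [← iUnion_sortedSector, ← iUnion_sortedSector, ← iUnion_prod] at hF ⊢
  rw [integral_iUnion_ae (fun _ => ((measurableSet_sortedSector _).prod
    (measurableSet_sortedSector _)).nullMeasurableSet) ?_ hF, tsum_fintype, Fintype.sum_prod_type]
  intro στ στ' hne
  rw [Measure.volume_eq_prod]
  refine aedisjoint_prod ?_
  by_cases h : στ.1 = στ'.1
  · exact .inr <| pairwise_aedisjoint_sortedSector fun h' => hne (Prod.ext h h')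
  · exact .inl <| pairwise_aedisjoint_sortedSector h

theorem setIntegral_sortedSector_prod (σ τ : Equiv.Perm (Fin n))
    (F : (Fin n → ℝ) × (Fin n → ℝ) → ℝ) :
    ∫ p in sortedSector s1 t1 n σ ×ˢ sortedSector s2 t2 n τ, F p =
      ∫ p in simplex2 s1 t1 s2 t2 n, F (p.1 ∘ σ.symm, p.2 ∘ τ.symm) := by
  let e := (MeasurableEquiv.arrowCongr' σ (.refl ℝ)).prodCongr
    (MeasurableEquiv.arrowCongr' τ (.refl ℝ))
  have he : MeasurePreserving e :=
    (volume_preserving_arrowCongr' σ _ (.id _)).prod (volume_preserving_arrowCongr' τ _ (.id _))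
  have he_apply (p : (Fin n → ℝ) × (Fin n → ℝ)) : e p = (p.1 ∘ σ.symm, p.2 ∘ τ.symm) := rfl
  have hpre :
      e ⁻¹' (sortedSector s1 t1 n σ ×ˢ sortedSector s2 t2 n τ) = simplex2 s1 t1 s2 t2 n := by
    ext p
    simp [he_apply, sortedSector, simplex2, comp_assoc]
  rw [← he.setIntegral_preimage_emb e.measurableEmbedding, hpre]
  rfl

theorem setIntegral_sortedSector_prod_eq_sigFull {d : ℕ} (X : Fin d → ℝ × ℝ → ℝ)
    (w : Fin n → Fin d) (σ τ : Equiv.Perm (Fin n)) :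
    ∫ p in sortedSector s1 t1 n σ ×ˢ sortedSector s2 t2 n τ,
        ∏ k, d12 (X (w k)) (p.1 k, p.2 k) = sigFull X s1 s2 t1 t2 (w ∘ σ) (τ⁻¹ * σ) := by
  rw [setIntegral_sortedSector_prod, sigFull]
  congr 1
  funext p
  rw [← Equiv.prod_comp σ]
  simp [Equiv.Perm.inv_def]

end SectorIntegrals

theorem stmt13_general {d : ℕ} (X : Fin d → ℝ × ℝ → ℝ) (hX : ∀ i, ContDiff ℝ 2 (X i))
    {n : ℕ} (w : Fin n → Fin d)
    (s1 s2 t1 t2 : ℝ) (h1 : s1 ≤ t1)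
    (h2 : s2 ≤ t2) :
    (∏ k : Fin n,
        (X (w k) (t1, t2) - X (w k) (s1, t2) - X (w k) (t1, s2) + X (w k) (s1, s2))) =
      ∑ ν : Equiv.Perm (Fin n), ∑ ν' : Equiv.Perm (Fin n),
        sigFull X s1 s2 t1 t2 (w ∘ ν) ν' := by
  let F (p : (Fin n → ℝ) × (Fin n → ℝ)) : ℝ := ∏ k, d12 (X (w k)) (p.1 k, p.2 k)
  have hd12 (k : Fin n) : Continuous (d12 (X (w k))) := continuous_d12 (hX (w k))
  have hF : IntegrableOn F ((univ.pi fun _ => Icc s1 t1) ×ˢ univ.pi fun _ => Icc s2 t2) :=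
    (by fun_prop : Continuous F).continuousOn.integrableOn_compact
      ((isCompact_univ_pi fun _ => isCompact_Icc).prod (isCompact_univ_pi fun _ => isCompact_Icc))
  calc
    _ = ∏ k, ∫ z in Icc s1 t1 ×ˢ Icc s2 t2, d12 (X (w k)) z :=
      Finset.prod_congr rfl fun k _ => rectIncrement_eq_setIntegral_d12 (hX (w k)) h1 h2
    _ = ∫ p in (univ.pi fun _ => Icc s1 t1) ×ˢ univ.pi fun _ => Icc s2 t2, F p :=
      prod_setIntegral_eq_setIntegral_pi_prod _ _ _
    _ = ∑ σ, ∑ τ, ∫ p in sortedSector s1 t1 n σ ×ˢ sortedSector s2 t2 n τ, F p :=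
      setIntegral_pi_Icc_prod_eq_sum_sortedSector hF
    _ = ∑ σ : Equiv.Perm (Fin n), ∑ τ : Equiv.Perm (Fin n),
          sigFull X s1 s2 t1 t2 (w ∘ σ) (τ⁻¹ * σ) := by
      simp only [F, setIntegral_sortedSector_prod_eq_sigFull]
    _ = _ := Finset.sum_congr rfl fun σ _ =>
      ((Equiv.inv _).trans (Equiv.mulRight σ)).sum_comp (sigFull X s1 s2 t1 t2 (w ∘ σ))

/-- the product of rectangular increments equals the sum of full 2D
signature coefficients over all pairs of permutations:
`∏ₖ □_{s,t} X^{wₖ} = ∑_{ν,ν'} ⟨S_{s,t}(X),(w_ν, ν')⟩`. -/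
theorem stmt13 {d : ℕ} (T : ℝ) (X : Fin d → ℝ × ℝ → ℝ) (hX : ∀ i, ContDiff ℝ 2 (X i))
    {n : ℕ} (w : Fin n → Fin d)
    (s1 s2 t1 t2 : ℝ) (hs1 : 0 ≤ s1) (h1 : s1 ≤ t1) (ht1 : t1 ≤ T)
    (hs2 : 0 ≤ s2) (h2 : s2 ≤ t2) (ht2 : t2 ≤ T) :
    (∏ k : Fin n,
        (X (w k) (t1, t2) - X (w k) (s1, t2) - X (w k) (t1, s2) + X (w k) (s1, s2))) =
      ∑ ν : Equiv.Perm (Fin n), ∑ ν' : Equiv.Perm (Fin n),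
        sigFull X s1 s2 t1 t2 (w ∘ ν) ν' :=
  stmt13_general X hX w s1 s2 t1 t2 h1 h2
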